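/- arXiv:2108.09715 — 2 statements merged into one kernel-verified Lean document; each statement's English description precedes it below -/
import Mathlib

section
/- Let q, r : ℝ³ → ℂ be smooth functions of (x,y,t) satisfying the second and third AKNS flows. Then the function u = q·r satisfies the KP equation (4u_t − 12 u u_x − u_{xxx})_x + 3 u_{yy} = 0 at every point of ℝ³. -/
open Complex

noncomputable def pdx {E : Type*} [NormedAddCommGroup E] [NormedSpace ℝ E]
    (f : ℝ × ℝ × ℝ → E) (p : ℝ × ℝ × ℝ) : E :=
  deriv (fun s => f (s, p.2.1, p.2.2)) p.1

noncomputable def pdy {E : Type*} [NormedAddCommGroup E] [NormedSpace ℝ E]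
    (f : ℝ × ℝ × ℝ → E) (p : ℝ × ℝ × ℝ) : E :=
  deriv (fun s => f (p.1, s, p.2.2)) p.2.1

noncomputable def pdt {E : Type*} [NormedAddCommGroup E] [NormedSpace ℝ E]
    (f : ℝ × ℝ × ℝ → E) (p : ℝ × ℝ × ℝ) : E :=
  deriv (fun s => f (p.1, p.2.1, s)) p.2.2

section Helpers

variable {f g : ℝ × ℝ × ℝ → ℂ}

private lemma hasDerivAt_sectX (hf : ContDiff ℝ (⊤ : ℕ∞) f) (x y t : ℝ) :
    HasDerivAt (fun s => f (s, y, t)) (fderiv ℝ f (x, y, t) (1, 0, 0)) x :=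
  (hf.differentiable (by simp) (x, y, t)).hasFDerivAt.comp_hasDerivAt x
    (HasDerivAt.prodMk (hasDerivAt_id x) (hasDerivAt_const x (y, t)))

private lemma hasDerivAt_sectY (hf : ContDiff ℝ (⊤ : ℕ∞) f) (x y t : ℝ) :
    HasDerivAt (fun s => f (x, s, t)) (fderiv ℝ f (x, y, t) (0, 1, 0)) y :=
  (hf.differentiable (by simp) (x, y, t)).hasFDerivAt.comp_hasDerivAt y
    (HasDerivAt.prodMk (hasDerivAt_const y x) (HasDerivAt.prodMk (hasDerivAt_id y) (hasDerivAt_const y t)))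

private lemma hasDerivAt_sectT (hf : ContDiff ℝ (⊤ : ℕ∞) f) (x y t : ℝ) :
    HasDerivAt (fun s => f (x, y, s)) (fderiv ℝ f (x, y, t) (0, 0, 1)) t :=
  (hf.differentiable (by simp) (x, y, t)).hasFDerivAt.comp_hasDerivAt t
    (HasDerivAt.prodMk (hasDerivAt_const t x) (HasDerivAt.prodMk (hasDerivAt_const t y) (hasDerivAt_id t)))

private lemma pdx_eq (hf : ContDiff ℝ (⊤ : ℕ∞) f) (p : ℝ × ℝ × ℝ) :
    pdx f p = fderiv ℝ f p (1, 0, 0) := by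
  obtain ⟨x, y, t⟩ := p
  exact (hasDerivAt_sectX hf x y t).deriv

private lemma pdy_eq (hf : ContDiff ℝ (⊤ : ℕ∞) f) (p : ℝ × ℝ × ℝ) :
    pdy f p = fderiv ℝ f p (0, 1, 0) := by
  obtain ⟨x, y, t⟩ := p
  exact (hasDerivAt_sectY hf x y t).deriv

private lemma contDiff_pdx (hf : ContDiff ℝ (⊤ : ℕ∞) f) : ContDiff ℝ (⊤ : ℕ∞) (pdx f) := by
  have h : pdx f = fun p => fderiv ℝ f p (1, 0, 0) := funext (pdx_eq hf)
  rw [h]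
  exact (hf.fderiv_right (by simp)).clm_apply contDiff_const

private lemma pdx_mul (hf : ContDiff ℝ (⊤ : ℕ∞) f) (hg : ContDiff ℝ (⊤ : ℕ∞) g) (p : ℝ × ℝ × ℝ) :
    pdx (fun x => f x * g x) p = pdx f p * g p + f p * pdx g p := by
  obtain ⟨x, y, t⟩ := p
  exact deriv_mul (hasDerivAt_sectX hf x y t).differentiableAt
    (hasDerivAt_sectX hg x y t).differentiableAt

private lemma pdx_add (hf : ContDiff ℝ (⊤ : ℕ∞) f) (hg : ContDiff ℝ (⊤ : ℕ∞) g) (p : ℝ × ℝ × ℝ) :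
    pdx (fun x => f x + g x) p = pdx f p + pdx g p := by
  obtain ⟨x, y, t⟩ := p
  exact deriv_add (hasDerivAt_sectX hf x y t).differentiableAt
    (hasDerivAt_sectX hg x y t).differentiableAt

private lemma pdx_const_mul (hf : ContDiff ℝ (⊤ : ℕ∞) f) (c : ℂ) (p : ℝ × ℝ × ℝ) :
    pdx (fun x => c * f x) p = c * pdx f p := by
  obtain ⟨x, y, t⟩ := p
  exact deriv_const_mul c (hasDerivAt_sectX hf x y t).differentiableAt

private lemma pdy_mul (hf : ContDiff ℝ (⊤ : ℕ∞) f) (hg : ContDiff ℝ (⊤ : ℕ∞) g) (p : ℝ × ℝ × ℝ) :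
    pdy (fun x => f x * g x) p = pdy f p * g p + f p * pdy g p := by
  obtain ⟨x, y, t⟩ := p
  exact deriv_mul (hasDerivAt_sectY hf x y t).differentiableAt
    (hasDerivAt_sectY hg x y t).differentiableAt

private lemma pdy_add (hf : ContDiff ℝ (⊤ : ℕ∞) f) (hg : ContDiff ℝ (⊤ : ℕ∞) g) (p : ℝ × ℝ × ℝ) :
    pdy (fun x => f x + g x) p = pdy f p + pdy g p := by
  obtain ⟨x, y, t⟩ := p
  exact deriv_add (hasDerivAt_sectY hf x y t).differentiableAt
    (hasDerivAt_sectY hg x y t).differentiableAt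

private lemma pdy_const_mul (hf : ContDiff ℝ (⊤ : ℕ∞) f) (c : ℂ) (p : ℝ × ℝ × ℝ) :
    pdy (fun x => c * f x) p = c * pdy f p := by
  obtain ⟨x, y, t⟩ := p
  exact deriv_const_mul c (hasDerivAt_sectY hf x y t).differentiableAt

private lemma pdt_mul (hf : ContDiff ℝ (⊤ : ℕ∞) f) (hg : ContDiff ℝ (⊤ : ℕ∞) g) (p : ℝ × ℝ × ℝ) :
    pdt (fun x => f x * g x) p = pdt f p * g p + f p * pdt g p := by
  obtain ⟨x, y, t⟩ := p
  exact deriv_mul (hasDerivAt_sectT hf x y t).differentiableAt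
    (hasDerivAt_sectT hg x y t).differentiableAt

private lemma pdy_pdx_comm (hf : ContDiff ℝ (⊤ : ℕ∞) f) : pdy (pdx f) = pdx (pdy f) := by
  have hdf : ContDiff ℝ (⊤ : ℕ∞) (fderiv ℝ f) := hf.fderiv_right (by simp)
  funext p
  have hx : pdx f = fun p => fderiv ℝ f p (1, 0, 0) := funext (pdx_eq hf)
  have hy : pdy f = fun p => fderiv ℝ f p (0, 1, 0) := funext (pdy_eq hf)
  have hcx : ContDiff ℝ (⊤ : ℕ∞) (fun p => fderiv ℝ f p (1, 0, 0)) := hdf.clm_apply contDiff_const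
  have hcy : ContDiff ℝ (⊤ : ℕ∞) (fun p => fderiv ℝ f p (0, 1, 0)) := hdf.clm_apply contDiff_const
  rw [hx, hy, pdy_eq hcx p, pdx_eq hcy p]
  have e : ∀ v w : ℝ × ℝ × ℝ, fderiv ℝ (fun p => fderiv ℝ f p v) p w
      = fderiv ℝ (fderiv ℝ f) p w v := by
    intro v w
    rw [fderiv_clm_apply (hdf.differentiable (by simp) p) (differentiableAt_const v)]
    simp
  rw [e, e]
  exact second_derivative_symmetric (fun z => (hf.differentiable (by simp) z).hasFDerivAt)
    ((hdf.differentiable (by simp) p).hasFDerivAt) _ _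

end Helpers

/-- if smooth `q, r : ℝ³ → ℂ` satisfy the second and third AKNS flows,
then `u = q·r` satisfies the KP equation `(4u_t − 12 u u_x − u_{xxx})_x + 3 u_{yy} = 0`. -/
theorem kp_of_akns_flows (q r : ℝ × ℝ × ℝ → ℂ)
    (hq : ContDiff ℝ (⊤ : ℕ∞) q) (hr : ContDiff ℝ (⊤ : ℕ∞) r)
    (h2q : ∀ p, I * pdy q p = -pdx (pdx q) p - 2 * (q p) ^ 2 * r p)
    (h2r : ∀ p, I * pdy r p = pdx (pdx r) p + 2 * q p * (r p) ^ 2)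
    (h3q : ∀ p, pdt q p = pdx (pdx (pdx q)) p + 6 * pdx q p * q p * r p)
    (h3r : ∀ p, pdt r p = pdx (pdx (pdx r)) p + 6 * q p * r p * pdx r p) :
    ∀ p, pdx (fun p' =>
        4 * pdt (fun p'' => q p'' * r p'') p'
          - 12 * (q p' * r p') * pdx (fun p'' => q p'' * r p'') p'
          - pdx (pdx (pdx (fun p'' => q p'' * r p''))) p') p
      + 3 * pdy (pdy (fun p'' => q p'' * r p'')) p = 0 := by
  have hq1 : ContDiff ℝ (⊤ : ℕ∞) (pdx q) := contDiff_pdx hq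
  have hq2 : ContDiff ℝ (⊤ : ℕ∞) (pdx (pdx q)) := contDiff_pdx hq1
  have hq3 : ContDiff ℝ (⊤ : ℕ∞) (pdx (pdx (pdx q))) := contDiff_pdx hq2
  have hr1 : ContDiff ℝ (⊤ : ℕ∞) (pdx r) := contDiff_pdx hr
  have hr2 : ContDiff ℝ (⊤ : ℕ∞) (pdx (pdx r)) := contDiff_pdx hr1
  have hr3 : ContDiff ℝ (⊤ : ℕ∞) (pdx (pdx (pdx r))) := contDiff_pdx hr2
  -- x-derivatives of u = q*r
  have hux : pdx (fun p'' => q p'' * r p'') = fun p => pdx q p * r p + q p * pdx r p :=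
    funext (pdx_mul hq hr)
  have huxx : pdx (pdx (fun p'' => q p'' * r p''))
      = fun p => pdx (pdx q) p * r p + 2 * (pdx q p * pdx r p) + q p * pdx (pdx r) p := by
    rw [hux]; funext p
    rw [pdx_add (hq1.mul hr) (hq.mul hr1), pdx_mul hq1 hr, pdx_mul hq hr1]
    ring
  have huxxx : pdx (pdx (pdx (fun p'' => q p'' * r p'')))
      = fun p => pdx (pdx (pdx q)) p * r p + 3 * (pdx (pdx q) p * pdx r p)
        + 3 * (pdx q p * pdx (pdx r) p) + q p * pdx (pdx (pdx r)) p := by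
    rw [huxx]; funext p
    rw [pdx_add ((hq2.mul hr).add (contDiff_const.mul (hq1.mul hr1))) (hq.mul hr2),
        pdx_add (hq2.mul hr) (contDiff_const.mul (hq1.mul hr1)),
        pdx_mul hq2 hr, pdx_const_mul (hq1.mul hr1), pdx_mul hq1 hr1, pdx_mul hq hr2]
    ring
  have hut : ∀ p, pdt (fun p'' => q p'' * r p'') p = pdt q p * r p + q p * pdt r p :=
    pdt_mul hq hr
  -- the inner function of the x-part, rewritten using the third flows
  have hG : (fun p' =>
        4 * pdt (fun p'' => q p'' * r p'') p'
          - 12 * (q p' * r p') * pdx (fun p'' => q p'' * r p'') p'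
          - pdx (pdx (pdx (fun p'' => q p'' * r p''))) p')
      = fun p' => 3 * (pdx (pdx (pdx q)) p' * r p') + 3 * (q p' * pdx (pdx (pdx r)) p')
          + (-3) * (pdx (pdx q) p' * pdx r p') + (-3) * (pdx q p' * pdx (pdx r) p')
          + 12 * (q p' * (pdx q p' * (r p' * r p')))
          + 12 * (q p' * (q p' * (r p' * pdx r p'))) := by
    funext p'
    simp only [huxxx]
    simp only [hux, hut, h3q, h3r]
    ring
  -- y-derivatives via the second flows
  have hyq : pdy q = fun p => I * pdx (pdx q) p + (2 * I) * ((q p * q p) * r p) := by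
    funext p
    linear_combination (-I) * h2q p + pdy q p * Complex.I_mul_I
  have hyr : pdy r = fun p => (-I) * pdx (pdx r) p + (-(2 * I)) * (q p * (r p * r p)) := by
    funext p
    linear_combination (-I) * h2r p + pdy r p * Complex.I_mul_I
  have hyu : pdy (fun p'' => q p'' * r p'')
      = fun p => I * (pdx (pdx q) p * r p) + (-I) * (q p * pdx (pdx r) p) := by
    funext p
    rw [pdy_mul hq hr]
    simp only [hyq, hyr]
    ring
  have hcq2 : pdy (pdx (pdx q)) = fun p =>
      I * pdx (pdx (pdx (pdx q))) p
        + (2 * I) * (2 * (pdx q p * pdx q p * r p) + 2 * (q p * pdx (pdx q) p * r p)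
            + 4 * (q p * pdx q p * pdx r p) + q p * q p * pdx (pdx r) p) := by
    rw [pdy_pdx_comm hq1, pdy_pdx_comm hq, hyq]
    have step1 : pdx (fun p => I * pdx (pdx q) p + (2 * I) * ((q p * q p) * r p))
        = fun p => I * pdx (pdx (pdx q)) p
            + (2 * I) * ((pdx q p * q p + q p * pdx q p) * r p + (q p * q p) * pdx r p) := by
      funext p
      rw [pdx_add (contDiff_const.mul hq2) (contDiff_const.mul ((hq.mul hq).mul hr)),
          pdx_const_mul hq2, pdx_const_mul ((hq.mul hq).mul hr),
          pdx_mul (hq.mul hq) hr, pdx_mul hq hq]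
    rw [step1]
    funext p
    rw [pdx_add (contDiff_const.mul hq3)
          (contDiff_const.mul ((((hq1.mul hq).add (hq.mul hq1)).mul hr).add ((hq.mul hq).mul hr1))),
        pdx_const_mul hq3,
        pdx_const_mul ((((hq1.mul hq).add (hq.mul hq1)).mul hr).add ((hq.mul hq).mul hr1)),
        pdx_add (((hq1.mul hq).add (hq.mul hq1)).mul hr) ((hq.mul hq).mul hr1),
        pdx_mul ((hq1.mul hq).add (hq.mul hq1)) hr,
        pdx_add (hq1.mul hq) (hq.mul hq1),
        pdx_mul hq1 hq, pdx_mul hq hq1,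
        pdx_mul (hq.mul hq) hr1, pdx_mul hq hq]
    ring
  have hcr2 : pdy (pdx (pdx r)) = fun p =>
      (-I) * pdx (pdx (pdx (pdx r))) p
        + (-(2 * I)) * (pdx (pdx q) p * (r p * r p) + 4 * (pdx q p * (r p * pdx r p))
            + 2 * (q p * (pdx r p * pdx r p)) + 2 * (q p * (r p * pdx (pdx r) p))) := by
    rw [pdy_pdx_comm hr1, pdy_pdx_comm hr, hyr]
    have step1 : pdx (fun p => (-I) * pdx (pdx r) p + (-(2 * I)) * (q p * (r p * r p)))
        = fun p => (-I) * pdx (pdx (pdx r)) p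
            + (-(2 * I)) * (pdx q p * (r p * r p) + q p * (pdx r p * r p + r p * pdx r p)) := by
      funext p
      rw [pdx_add (contDiff_const.mul hr2) (contDiff_const.mul (hq.mul (hr.mul hr))),
          pdx_const_mul hr2, pdx_const_mul (hq.mul (hr.mul hr)),
          pdx_mul hq (hr.mul hr), pdx_mul hr hr]
    rw [step1]
    funext p
    rw [pdx_add (contDiff_const.mul hr3)
          (contDiff_const.mul ((hq1.mul (hr.mul hr)).add (hq.mul ((hr1.mul hr).add (hr.mul hr1))))),
        pdx_const_mul hr3,
        pdx_const_mul ((hq1.mul (hr.mul hr)).add (hq.mul ((hr1.mul hr).add (hr.mul hr1)))),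
        pdx_add (hq1.mul (hr.mul hr)) (hq.mul ((hr1.mul hr).add (hr.mul hr1))),
        pdx_mul hq1 (hr.mul hr), pdx_mul hr hr,
        pdx_mul hq ((hr1.mul hr).add (hr.mul hr1)),
        pdx_add (hr1.mul hr) (hr.mul hr1),
        pdx_mul hr1 hr, pdx_mul hr hr1]
    ring
  intro p
  rw [hG, hyu]
  rw [pdx_add (((((contDiff_const.mul (hq3.mul hr)).add (contDiff_const.mul (hq.mul hr3))).add
        (contDiff_const.mul (hq2.mul hr1))).add (contDiff_const.mul (hq1.mul hr2))).add
        (contDiff_const.mul (hq.mul (hq1.mul (hr.mul hr)))))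
        (contDiff_const.mul (hq.mul (hq.mul (hr.mul hr1)))),
      pdx_add ((((contDiff_const.mul (hq3.mul hr)).add (contDiff_const.mul (hq.mul hr3))).add
        (contDiff_const.mul (hq2.mul hr1))).add (contDiff_const.mul (hq1.mul hr2)))
        (contDiff_const.mul (hq.mul (hq1.mul (hr.mul hr)))),
      pdx_add (((contDiff_const.mul (hq3.mul hr)).add (contDiff_const.mul (hq.mul hr3))).add
        (contDiff_const.mul (hq2.mul hr1))) (contDiff_const.mul (hq1.mul hr2)),
      pdx_add ((contDiff_const.mul (hq3.mul hr)).add (contDiff_const.mul (hq.mul hr3)))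
        (contDiff_const.mul (hq2.mul hr1)),
      pdx_add (contDiff_const.mul (hq3.mul hr)) (contDiff_const.mul (hq.mul hr3)),
      pdx_const_mul (hq3.mul hr), pdx_const_mul (hq.mul hr3),
      pdx_const_mul (hq2.mul hr1), pdx_const_mul (hq1.mul hr2),
      pdx_const_mul (hq.mul (hq1.mul (hr.mul hr))),
      pdx_const_mul (hq.mul (hq.mul (hr.mul hr1))),
      pdx_mul hq3 hr, pdx_mul hq hr3, pdx_mul hq2 hr1, pdx_mul hq1 hr2,
      pdx_mul hq (hq1.mul (hr.mul hr)), pdx_mul hq1 (hr.mul hr), pdx_mul hr hr,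
      pdx_mul hq (hq.mul (hr.mul hr1)), pdx_mul hq (hr.mul hr1), pdx_mul hr hr1]
  rw [pdy_add (contDiff_const.mul (hq2.mul hr)) (contDiff_const.mul (hq.mul hr2)),
      pdy_const_mul (hq2.mul hr), pdy_const_mul (hq.mul hr2),
      pdy_mul hq2 hr, pdy_mul hq hr2]
  simp only [hcq2, hcr2, hyq, hyr]
  linear_combination (3 * (pdx (pdx (pdx (pdx q))) p * r p + q p * pdx (pdx (pdx (pdx r))) p
      - 2 * (pdx (pdx q) p * pdx (pdx r) p) + 4 * (pdx q p * pdx q p * r p * r p)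
      + 4 * (q p * pdx (pdx q) p * r p * r p) + 16 * (q p * pdx q p * r p * pdx r p)
      + 4 * (q p * q p * pdx r p * pdx r p) + 4 * (q p * q p * r p * pdx (pdx r) p)))
      * Complex.I_mul_I
end

section
/- Let b, c ∈ ℝ and define θ(x,y,t) = c x + (2b² − c²) y + (6 b² c − c³) t. Then the plane-wave functions q = b e^{iθ} and r = b e^{−iθ} satisfy the second and third AKNS flows: i q_y = −q_{xx} − 2 q² r, i r_y = r_{xx} + 2 q r², q_t = q_{xxx} + 6 q_x q r and r_t = r_{xxx} + 6 q r r_x on all of ℝ³. -/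
/-!
A partial derivative of a plane wave `a e^{εθ}` is multiplication by `ε` times the
corresponding wavenumber of the affine phase `θ`, and `q r = b²` is constant. Each flow thus
reduces to a polynomial identity between the wavenumbers `c`, `2b² − c²`, `6b²c − c³`,
which is exactly the dispersion relation built into `θ`.
-/

open Complex

/-- The plane-wave phase `θ(x,y,t) = c x + (2b² − c²) y + (6b²c − c³) t`. -/
def planeTheta (b c : ℝ) (p : ℝ × ℝ × ℝ) : ℝ :=
  c * p.1 + (2 * b ^ 2 - c ^ 2) * p.2.1 + (6 * b ^ 2 * c - c ^ 3) * p.2.2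

theorem pdx_const_mul_s6 {𝕜 : Type*} [NontriviallyNormedField 𝕜] [NormedAlgebra ℝ 𝕜]
    (z : 𝕜) (f : ℝ × ℝ × ℝ → 𝕜) :
    pdx (fun p => z * f p) = fun p => z * pdx f p :=
  funext fun _ => deriv_const_mul_field _

theorem HasDerivAt.const_mul_cexp_mul_ofReal {φ : ℝ → ℝ} {k s : ℝ} (a ε : ℂ)
    (h : HasDerivAt φ k s) :
    HasDerivAt (fun s => a * Complex.exp (ε * (φ s : ℂ)))
      (ε * k * (a * Complex.exp (ε * (φ s : ℂ)))) s :=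
  ((h.ofReal_comp.const_mul ε).cexp.const_mul a).congr_deriv (by ring)

section PlaneWave

variable {φ : ℝ × ℝ × ℝ → ℝ} {k : ℝ}

theorem pdx_const_mul_cexp
    (hφ : ∀ p : ℝ × ℝ × ℝ, HasDerivAt (fun s => φ (s, p.2.1, p.2.2)) k p.1) (a ε : ℂ) :
    pdx (fun p => a * Complex.exp (ε * (φ p : ℂ))) =
      fun p => ε * k * (a * Complex.exp (ε * (φ p : ℂ))) :=
  funext fun p => ((hφ p).const_mul_cexp_mul_ofReal a ε).deriv

theorem pdy_const_mul_cexp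
    (hφ : ∀ p : ℝ × ℝ × ℝ, HasDerivAt (fun s => φ (p.1, s, p.2.2)) k p.2.1) (a ε : ℂ) :
    pdy (fun p => a * Complex.exp (ε * (φ p : ℂ))) =
      fun p => ε * k * (a * Complex.exp (ε * (φ p : ℂ))) :=
  funext fun p => ((hφ p).const_mul_cexp_mul_ofReal a ε).deriv

theorem pdt_const_mul_cexp
    (hφ : ∀ p : ℝ × ℝ × ℝ, HasDerivAt (fun s => φ (p.1, p.2.1, s)) k p.2.2) (a ε : ℂ) :
    pdt (fun p => a * Complex.exp (ε * (φ p : ℂ))) =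
      fun p => ε * k * (a * Complex.exp (ε * (φ p : ℂ))) :=
  funext fun p => ((hφ p).const_mul_cexp_mul_ofReal a ε).deriv

end PlaneWave

section PlaneTheta

variable (b c : ℝ) (p : ℝ × ℝ × ℝ)

theorem hasDerivAt_planeTheta_x :
    HasDerivAt (fun s => planeTheta b c (s, p.2.1, p.2.2)) c p.1 := by
  simp only [planeTheta]
  exact ((((hasDerivAt_id' p.1).const_mul c).add_const _).add_const _).congr_deriv (mul_one _)

theorem hasDerivAt_planeTheta_y :
    HasDerivAt (fun s => planeTheta b c (p.1, s, p.2.2)) (2 * b ^ 2 - c ^ 2) p.2.1 := by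
  simp only [planeTheta]
  exact ((((hasDerivAt_id' p.2.1).const_mul _).const_add _).add_const _).congr_deriv (mul_one _)

theorem hasDerivAt_planeTheta_t :
    HasDerivAt (fun s => planeTheta b c (p.1, p.2.1, s)) (6 * b ^ 2 * c - c ^ 3) p.2.2 := by
  simp only [planeTheta]
  exact (((hasDerivAt_id' p.2.2).const_mul _).const_add _).congr_deriv (mul_one _)

end PlaneTheta

/-- the plane waves `q = b e^{iθ}`, `r = b e^{−iθ}` satisfy the second
and third AKNS flows on all of `ℝ³`. -/
theorem plane_wave_satisfies_akns (b c : ℝ) :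
    let q : ℝ × ℝ × ℝ → ℂ := fun p => (b : ℂ) * Complex.exp (I * (planeTheta b c p : ℂ))
    let r : ℝ × ℝ × ℝ → ℂ := fun p => (b : ℂ) * Complex.exp (-I * (planeTheta b c p : ℂ))
    (∀ p, I * pdy q p = -pdx (pdx q) p - 2 * (q p) ^ 2 * r p) ∧
    (∀ p, I * pdy r p = pdx (pdx r) p + 2 * q p * (r p) ^ 2) ∧
    (∀ p, pdt q p = pdx (pdx (pdx q)) p + 6 * pdx q p * q p * r p) ∧
    (∀ p, pdt r p = pdx (pdx (pdx r)) p + 6 * q p * r p * pdx r p) := by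
  intro q r
  have hq_x : pdx q = fun p => I * c * q p :=
    pdx_const_mul_cexp (hasDerivAt_planeTheta_x b c) _ _
  have hr_x : pdx r = fun p => -I * c * r p :=
    pdx_const_mul_cexp (hasDerivAt_planeTheta_x b c) _ _
  have hq_y : pdy q = fun p => I * (2 * b ^ 2 - c ^ 2 : ℝ) * q p :=
    pdy_const_mul_cexp (hasDerivAt_planeTheta_y b c) _ _
  have hr_y : pdy r = fun p => -I * (2 * b ^ 2 - c ^ 2 : ℝ) * r p :=
    pdy_const_mul_cexp (hasDerivAt_planeTheta_y b c) _ _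
  have hq_t : pdt q = fun p => I * (6 * b ^ 2 * c - c ^ 3 : ℝ) * q p :=
    pdt_const_mul_cexp (hasDerivAt_planeTheta_t b c) _ _
  have hr_t : pdt r = fun p => -I * (6 * b ^ 2 * c - c ^ 3 : ℝ) * r p :=
    pdt_const_mul_cexp (hasDerivAt_planeTheta_t b c) _ _
  have hqr : ∀ p, q p * r p = b ^ 2 := fun p => by
    rw [mul_mul_mul_comm, ← Complex.exp_add, neg_mul, add_neg_cancel, Complex.exp_zero,
      mul_one, sq]
  refine ⟨fun p => ?_, fun p => ?_, fun p => ?_, fun p => ?_⟩ <;>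
    simp only [hq_x, hr_x, hq_y, hr_y, hq_t, hr_t, pdx_const_mul_s6] <;> push_cast
  · linear_combination (2 * q p) * hqr p + (2 * b ^ 2 * q p) * I_sq
  · linear_combination (-2 * r p) * hqr p - (2 * b ^ 2 * r p) * I_sq
  · linear_combination (-6 * I * c * q p) * hqr p - (c ^ 3 * I * q p) * I_sq
  · linear_combination (6 * I * c * r p) * hqr p + (c ^ 3 * I * r p) * I_sq
end
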